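/- In the epidemic setting with severity, testing and app usage, let t ∈ ℝ with Ω_t nonempty, assume the app-refined suppression hypothesis holds at all times t' < t, and assume the app notification hypothesis: for constants s^{c,app}_t, s^{c,no app}_t ∈ [0,1], the contact-tracing notification time τ^{A,c} of app users satisfies, for every ρ > 0, P_{t,app}(τ^{A,c} ≤ ρ) = s^{c,app}_t·(F̌^{T,app}_t(ρ) − F̌^{T,app}_t(0)) + s^{c,no app}_t·(F̌^{T,no app}_t(ρ) − F̌^{T,no app}_t(0)), where F̌^{T,a}_t(ρ) := P_t(τ̌^T_t ≤ ρ and Â_t = a) and τ̌^T(ω) := τ^T(σ(ω)) − τ^σ(ω). Then for every ρ > 0, P_{t,app}(τ^{A,c} ≤ ρ) = s^{c,app}_t · Σ_g Σ_{τ>0} ((F^T_{t−τ,g,app}(ρ+τ) − F^T_{t−τ,g,app}(τ))/(1 − ξ_{t−τ}·F^T_{t−τ,g,app}(τ)))·P_t(τ^σ_t = τ, Ĝ_t = g, Â_t = app) + s^{c,no app}_t · Σ_g Σ_{τ>0} ((F^T_{t−τ,g,no app}(ρ+τ) − F^T_{t−τ,g,no app}(τ))/(1 − ξ_{t−τ}·F^T_{t−τ,g,no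 app}(τ)))·P_t(τ^σ_t = τ, Ĝ_t = g, Â_t = no app), with g ranging over the range of G and each sum over τ running over the finitely many positive generation times with the corresponding set Ω_{t−τ,g,a} nonempty. -/

import Mathlib

open Finset
open scoped Classical ENNReal NNReal

noncomputable section

variable {Ω : Type*} [Fintype Ω]

/-- Number of elements of `Ω` satisfying `E`, as a real number. -/
def cnt (E : Ω → Prop) : ℝ := ((Finset.univ.filter E).card : ℝ)

/-- The uniform (counting) probability of the event `E`. -/
def pr (E : Ω → Prop) : ℝ := cnt E / (Fintype.card Ω : ℝ)

/-- The conditional probability of the event `E` given the event `C`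
(junk value `0` if `C` is empty). -/
def prC (C E : Ω → Prop) : ℝ := cnt (fun ω => C ω ∧ E ω) / cnt C

/-- The expectation of `X` under the uniform probability measure. -/
def expec (X : Ω → ℝ) : ℝ := (∑ ω, X ω) / (Fintype.card Ω : ℝ)

/-- The conditional expectation of `X` given the event `C`, i.e. the average of `X`
over `C` (junk value `0` if `C` is empty). -/
def expecC (C : Ω → Prop) (X : Ω → ℝ) : ℝ :=
  (∑ ω ∈ Finset.univ.filter C, X ω) / cnt C

end

/-- Whether or not an individual uses the contact-tracing app. -/
inductive AppUse : Type
  | app : AppUse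
  | noapp : AppUse
  deriving DecidableEq

instance : Fintype AppUse :=
  ⟨{AppUse.app, AppUse.noapp}, fun x => by cases x <;> simp⟩


noncomputable section

variable {Ω : Type*} [Fintype Ω]

/-- `ninf tI σ τ ω` is the number of people infected by `ω` exactly at `ω`'s infectious
age `τ`: the number of `ω' ∈ Ω_{>0}` with `σ ω' = ω` and generation time `τ^σ ω' = τ`. -/
def ninf (tI : Ω → ℝ) (σ : Ω → Ω) (τ : ℝ) (ω : Ω) : ℝ :=
  cnt (fun ω' => 0 < tI ω' ∧ σ ω' = ω ∧ tI ω' - tI (σ ω') = τ)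

/-- The (finitely many) positive times `τ` such that `Ω_{t-τ}` is nonempty. -/
def genTimes (tI : Ω → ℝ) (t : ℝ) : Finset ℝ :=
  (Finset.univ.image (fun ω' => t - tI ω')).filter (fun τ => 0 < τ)

end

noncomputable section

variable {Ω : Type*} [Fintype Ω]

/-- The (finitely many) positive times `τ` such that `Ω_{t-τ,g,a}` is nonempty. -/
def genTimesGA (tI G : Ω → ℝ) (A : Ω → AppUse) (t g : ℝ) (a : AppUse) : Finset ℝ :=
  ((Finset.univ.filter (fun ω' => G ω' = g ∧ A ω' = a)).image (fun ω' => t - tI ω')).filter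
    (fun τ => 0 < τ)

/-- `FT tI G τT t' g τ` is the improper CDF `F^T_{t',g}(τ) = P_{t',g}(τ^T ≤ τ)` of the
testing time of individuals infected at `t'` with severity `g`. -/
def FT (tI G : Ω → ℝ) (τT : Ω → ℝ≥0∞) (t' g τ : ℝ) : ℝ :=
  prC (fun ω => tI ω = t' ∧ G ω = g) (fun ω => (τT ω : EReal) ≤ (τ : ℝ))

/-- `FTa tI G A τT t' g a τ` is the improper CDF
`F^T_{t',g,a}(τ) = P_{t',g,a}(τ^T ≤ τ)` of the testing time of individuals infected at
`t'` with severity `g` and app usage `a`. -/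
def FTa (tI G : Ω → ℝ) (A : Ω → AppUse) (τT : Ω → ℝ≥0∞) (t' g : ℝ) (a : AppUse)
    (τ : ℝ) : ℝ :=
  prC (fun ω => tI ω = t' ∧ G ω = g ∧ A ω = a) (fun ω => (τT ω : EReal) ≤ (τ : ℝ))

end

/-! Split the app users notified in `(0, ρ]` at time `t` by the severity `g`, app usage `a` and
generation time `τ` of their infector: such an infector belongs to the cohort `Ω_{t-τ,g,a}` and
has its test time in `(τ, ρ + τ]`, so each piece is the sum of `n^τ` over those members of the
cohort. For test times `ρ' > τ` the suppression hypothesis makes the conditional mean of `n^τ`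
the constant `E(n^τ) / (1 - ξ F^T(τ))`, hence that sum is
`(F^T(ρ+τ) - F^T(τ)) / (1 - ξ F^T(τ))` times the number of all age-`τ` infectees of the cohort. -/

section Counting

variable {Ω : Type*} [Fintype Ω]

theorem cnt_congr {E F : Ω → Prop} (h : ∀ ω, E ω ↔ F ω) : cnt E = cnt F :=
  congrArg cnt (funext fun ω => propext (h ω))

theorem expecC_congr {C D : Ω → Prop} (X : Ω → ℝ) (h : ∀ ω, C ω ↔ D ω) :
    expecC C X = expecC D X :=
  congrArg (expecC · X) (funext fun ω => propext (h ω))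

theorem cnt_eq_zero_iff {E : Ω → Prop} : cnt E = 0 ↔ ∀ ω, ¬ E ω := by
  simp [cnt, Finset.filter_eq_empty_iff]

theorem cnt_pos {E : Ω → Prop} {ω : Ω} (h : E ω) : 0 < cnt E :=
  Nat.cast_pos.2 (Finset.card_pos.2 ⟨ω, by simpa using h⟩)

theorem prC_pos {C E : Ω → Prop} {ω : Ω} (hC : C ω) (hE : E ω) : 0 < prC C E :=
  div_pos (cnt_pos (E := fun ω => C ω ∧ E ω) ⟨hC, hE⟩) (cnt_pos hC)

theorem prC_mul_cnt (C E : Ω → Prop) : prC C E * cnt C = cnt (fun ω => C ω ∧ E ω) := by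
  rcases eq_or_ne (cnt C) 0 with h | h
  · rw [h, mul_zero, eq_comm, cnt_eq_zero_iff]
    exact fun ω hω => cnt_eq_zero_iff.1 h ω hω.1
  · exact div_mul_cancel₀ _ h

theorem expecC_mul_cnt (C : Ω → Prop) (X : Ω → ℝ) :
    expecC C X * cnt C = ∑ ω ∈ Finset.univ.filter C, X ω := by
  rcases eq_or_ne (cnt C) 0 with h | h
  · rw [h, mul_zero, Finset.filter_false_of_mem fun ω _ => cnt_eq_zero_iff.1 h ω,
      Finset.sum_empty]
  · exact div_mul_cancel₀ _ h

theorem cnt_sub_cnt_of_imp {E F : Ω → Prop} (h : ∀ ω, E ω → F ω) :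
    cnt F - cnt E = cnt (fun ω => F ω ∧ ¬ E ω) := by
  rw [sub_eq_iff_eq_add', cnt, cnt, cnt, ← Nat.cast_add,
    ← Finset.card_filter_add_card_filter_not (s := Finset.univ.filter F) (p := E),
    Finset.filter_filter, Finset.filter_filter]
  congr 3
  · ext ω
    simpa using h ω
  · congr!

theorem cnt_eq_sum_cnt_fiber {ι : Type*} (s : Finset ι) (f : Ω → ι) {E : Ω → Prop}
    (h : ∀ ω, E ω → f ω ∈ s) : cnt E = ∑ i ∈ s, cnt (fun ω => E ω ∧ f ω = i) := by
  rw [cnt, Finset.card_eq_sum_card_fiberwise fun ω hω => h ω (Finset.mem_filter.1 hω).2,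
    Nat.cast_sum]
  simp only [Finset.filter_filter, cnt]
  congr!

theorem sum_eq_mul_cnt_of_expecC_fiber_eq {β : Type*} (k : Ω → β) (X : Ω → ℝ)
    (C : Ω → Prop) (m : ℝ) (h : ∀ ω, C ω → expecC (fun x => C x ∧ k x = k ω) X = m) :
    ∑ ω ∈ Finset.univ.filter C, X ω = m * cnt C := by
  rw [cnt_eq_sum_cnt_fiber ((Finset.univ.filter C).image k) k
      fun ω hω => Finset.mem_image_of_mem k (Finset.mem_filter.2 ⟨Finset.mem_univ ω, hω⟩),
    Finset.mul_sum,
    ← Finset.sum_fiberwise_of_maps_to fun ω hω => Finset.mem_image_of_mem k hω]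
  refine Finset.sum_congr rfl fun b hb => ?_
  obtain ⟨ω, hω, rfl⟩ := Finset.mem_image.1 hb
  rw [← h ω (Finset.mem_filter.1 hω).2, expecC_mul_cnt, Finset.filter_filter]
  congr!

end Counting

theorem EReal.sub_coe_le_coe_iff (y : EReal) (c r : ℝ) :
    y - c ≤ r ↔ y ≤ ((r + c : ℝ) : EReal) := by
  rw [EReal.sub_le_iff_le_add (.inl (EReal.coe_ne_bot c)) (.inl (EReal.coe_ne_top c)),
    EReal.coe_add]

section Epidemic

variable {Ω : Type*} [Fintype Ω]

theorem sum_ninf_eq_cnt (tI : Ω → ℝ) (σ : Ω → Ω) (τ : ℝ) (D : Ω → Prop) :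
    ∑ ω ∈ Finset.univ.filter D, ninf tI σ τ ω =
      cnt (fun ω => (0 < tI ω ∧ tI ω - tI (σ ω) = τ) ∧ D (σ ω)) := by
  rw [cnt_eq_sum_cnt_fiber (Finset.univ.filter D) σ fun ω hω => by simpa using hω.2]
  refine Finset.sum_congr rfl fun y hy => cnt_congr fun ω => ?_
  have hDy : D y := (Finset.mem_filter.1 hy).2
  constructor
  · rintro ⟨hpos, rfl, hτ⟩
    exact ⟨⟨⟨hpos, hτ⟩, hDy⟩, rfl⟩
  · rintro ⟨⟨⟨hpos, hτ⟩, -⟩, rfl⟩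
    exact ⟨hpos, rfl, hτ⟩

theorem cnt_infectees_of_window_eq (tI : Ω → ℝ) (σ : Ω → Ω) (τT : Ω → ℝ≥0∞)
    (C : Ω → Prop) (c τ ρ : ℝ) (hρ : 0 ≤ ρ)
    (hmean : ∀ ρ' : ℝ≥0∞, 0 < prC C (fun ω => τT ω = ρ') → ¬ (ρ' : EReal) ≤ (τ : ℝ) →
      expecC (fun ω => C ω ∧ τT ω = ρ') (ninf tI σ τ) = c * expecC C (ninf tI σ τ)) :
    cnt (fun ω => (0 < tI ω ∧ tI ω - tI (σ ω) = τ) ∧ C (σ ω) ∧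
        (τT (σ ω) : EReal) ≤ ((ρ + τ : ℝ) : EReal) ∧ ¬ (τT (σ ω) : EReal) ≤ (τ : ℝ)) =
      (prC C (fun ω => (τT ω : EReal) ≤ ((ρ + τ : ℝ) : EReal)) -
          prC C (fun ω => (τT ω : EReal) ≤ (τ : ℝ))) * c *
        cnt (fun ω => (0 < tI ω ∧ tI ω - tI (σ ω) = τ) ∧ C (σ ω)) := by
  set W : ℝ≥0∞ → Prop := fun x => (x : EReal) ≤ ((ρ + τ : ℝ) : EReal) ∧ ¬ (x : EReal) ≤ (τ : ℝ)
  have hfiber : ∀ ω, C ω ∧ W (τT ω) →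
      expecC (fun x => (C x ∧ W (τT x)) ∧ τT x = τT ω) (ninf tI σ τ) =
        c * expecC C (ninf tI σ τ) := by
    rintro ω ⟨hC, hW⟩
    rw [← hmean (τT ω) (prC_pos hC rfl) hW.2]
    exact expecC_congr _ fun x => ⟨fun h => ⟨h.1.1, h.2⟩, fun h => ⟨⟨h.1, h.2 ▸ hW⟩, h.2⟩⟩
  have hwindow : cnt (fun ω => C ω ∧ W (τT ω)) =
      (prC C (fun ω => (τT ω : EReal) ≤ ((ρ + τ : ℝ) : EReal)) -
        prC C (fun ω => (τT ω : EReal) ≤ (τ : ℝ))) * cnt C := by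
    rw [sub_mul, prC_mul_cnt, prC_mul_cnt, cnt_sub_cnt_of_imp fun ω h =>
      ⟨h.1, h.2.trans (EReal.coe_le_coe_iff.2 (le_add_of_nonneg_left hρ))⟩]
    exact cnt_congr fun ω => ⟨fun h => ⟨⟨h.1, h.2.1⟩, fun h' => h.2.2 h'.2⟩,
      fun h => ⟨h.1.1, h.1.2, fun h' => h.2 ⟨h.1.1, h'⟩⟩⟩
  rw [← sum_ninf_eq_cnt tI σ τ (fun ω => C ω ∧ W (τT ω)),
    sum_eq_mul_cnt_of_expecC_fiber_eq τT _ _ _ hfiber, hwindow, ← sum_ninf_eq_cnt,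
    ← expecC_mul_cnt]
  ring

def AppSuppressionAt (tI : Ω → ℝ) (σ : Ω → Ω) (G : Ω → ℝ) (A : Ω → AppUse)
    (τT : Ω → ℝ≥0∞) (ξ : ℝ → ℝ) (t' : ℝ) : Prop :=
  ∀ (g : ℝ) (a' : AppUse),
    (Finset.univ.filter (fun ω => tI ω = t' ∧ G ω = g ∧ A ω = a')).Nonempty →
    ∀ τ : ℝ, 0 < τ → ∀ ρ' : ℝ≥0∞,
      0 < prC (fun ω => tI ω = t' ∧ G ω = g ∧ A ω = a') (fun ω => τT ω = ρ') →
        0 < 1 - ξ t' * FTa tI G A τT t' g a' τ ∧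
        expecC (fun ω => tI ω = t' ∧ G ω = g ∧ A ω = a' ∧ τT ω = ρ')
            (ninf tI σ τ) =
          ((1 - ξ t' * (if (ρ' : EReal) ≤ (τ : ℝ) then (1 : ℝ) else 0)) /
              (1 - ξ t' * FTa tI G A τT t' g a' τ)) *
            expecC (fun ω => tI ω = t' ∧ G ω = g ∧ A ω = a') (ninf tI σ τ)

theorem cnt_notified_by_cohort_eq (tI : Ω → ℝ) (σ : Ω → Ω) (G : Ω → ℝ) (A : Ω → AppUse)
    (τT : Ω → ℝ≥0∞) (ξ : ℝ → ℝ) {t τ : ℝ} (hτ : 0 < τ)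
    (hsup : AppSuppressionAt tI σ G A τT ξ (t - τ)) {g : ℝ} {a : AppUse}
    (hne : ∃ ω, tI ω = t - τ ∧ G ω = g ∧ A ω = a) {ρ : ℝ} (hρ : 0 ≤ ρ) :
    cnt (fun ω => (((tI ω = t ∧ 0 < tI ω ∧
          (τT (σ ω) : EReal) - ((tI ω - tI (σ ω) : ℝ) : EReal) ≤ (ρ : ℝ) ∧ A (σ ω) = a) ∧
        ¬ (tI ω = t ∧ 0 < tI ω ∧
          (τT (σ ω) : EReal) - ((tI ω - tI (σ ω) : ℝ) : EReal) ≤ ((0 : ℝ) : EReal) ∧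
          A (σ ω) = a)) ∧ G (σ ω) = g) ∧ tI ω - tI (σ ω) = τ) =
      ((FTa tI G A τT (t - τ) g a (ρ + τ) - FTa tI G A τT (t - τ) g a τ) /
          (1 - ξ (t - τ) * FTa tI G A τT (t - τ) g a τ)) *
        cnt (fun ω => tI ω = t ∧ 0 < tI ω ∧ tI ω - tI (σ ω) = τ ∧ G (σ ω) = g ∧
          A (σ ω) = a) := by
  obtain ⟨ω₀, hω₀⟩ := hne
  have hmean : ∀ ρ' : ℝ≥0∞,
      0 < prC (fun ω => tI ω = t - τ ∧ G ω = g ∧ A ω = a) (fun ω => τT ω = ρ') →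
      ¬ (ρ' : EReal) ≤ (τ : ℝ) →
      expecC (fun ω => (tI ω = t - τ ∧ G ω = g ∧ A ω = a) ∧ τT ω = ρ') (ninf tI σ τ) =
        (1 - ξ (t - τ) * FTa tI G A τT (t - τ) g a τ)⁻¹ *
          expecC (fun ω => tI ω = t - τ ∧ G ω = g ∧ A ω = a) (ninf tI σ τ) := by
    intro ρ' hpos hρ'
    have h := (hsup g a ⟨ω₀, by simpa using hω₀⟩ τ hτ ρ' hpos).2
    rw [if_neg hρ', mul_zero, sub_zero, one_div] at h
    rw [← h]
    exact expecC_congr _ fun ω => by simp only [and_assoc]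
  have hinfector : ∀ ω, tI ω - tI (σ ω) = τ → (tI (σ ω) = t - τ ↔ tI ω = t) := fun ω h =>
    ⟨fun h' => by linarith, fun h' => by linarith⟩
  rw [cnt_congr fun ω => ?_, cnt_infectees_of_window_eq tI σ τT _ _ τ ρ hρ hmean,
    div_eq_mul_inv]
  · congr 1
    refine cnt_congr fun ω => ?_
    by_cases hτω : tI ω - tI (σ ω) = τ
    · simp only [hτω, hinfector ω hτω]
      tauto
    · simp [hτω]
  · by_cases hτω : tI ω - tI (σ ω) = τ
    · simp only [hτω, hinfector ω hτω, EReal.sub_coe_le_coe_iff, zero_add]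
      tauto
    · simp [hτω]

theorem prC_notified_sub_eq (tI : Ω → ℝ) (σ : Ω → Ω)
    (hσ : ∀ ω, 0 < tI ω → tI (σ ω) < tI ω) (G : Ω → ℝ) (A : Ω → AppUse) (τT : Ω → ℝ≥0∞)
    (ξ : ℝ → ℝ) (t : ℝ) (hsup : ∀ t' < t, AppSuppressionAt tI σ G A τT ξ t') (a : AppUse)
    {ρ : ℝ} (hρ : 0 ≤ ρ) :
    prC (fun ω => tI ω = t)
        (fun ω => 0 < tI ω ∧
          (τT (σ ω) : EReal) - ((tI ω - tI (σ ω) : ℝ) : EReal) ≤ (ρ : ℝ) ∧ A (σ ω) = a) -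
      prC (fun ω => tI ω = t)
        (fun ω => 0 < tI ω ∧
          (τT (σ ω) : EReal) - ((tI ω - tI (σ ω) : ℝ) : EReal) ≤ ((0 : ℝ) : EReal) ∧
          A (σ ω) = a) =
      ∑ g ∈ Finset.univ.image G, ∑ τ ∈ genTimesGA tI G A t g a,
        ((FTa tI G A τT (t - τ) g a (ρ + τ) - FTa tI G A τT (t - τ) g a τ) /
            (1 - ξ (t - τ) * FTa tI G A τT (t - τ) g a τ)) *
          prC (fun ω => tI ω = t)
            (fun ω => 0 < tI ω ∧ tI ω - tI (σ ω) = τ ∧ G (σ ω) = g ∧ A (σ ω) = a) := by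
  have hmono : ∀ ω, (tI ω = t ∧ 0 < tI ω ∧
        (τT (σ ω) : EReal) - ((tI ω - tI (σ ω) : ℝ) : EReal) ≤ ((0 : ℝ) : EReal) ∧
        A (σ ω) = a) →
      tI ω = t ∧ 0 < tI ω ∧
        (τT (σ ω) : EReal) - ((tI ω - tI (σ ω) : ℝ) : EReal) ≤ (ρ : ℝ) ∧ A (σ ω) = a :=
    fun ω h => ⟨h.1, h.2.1, h.2.2.1.trans (EReal.coe_le_coe_iff.2 hρ), h.2.2.2⟩
  have hgen : ∀ g ω, (tI ω = t ∧ 0 < tI ω ∧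
        (τT (σ ω) : EReal) - ((tI ω - tI (σ ω) : ℝ) : EReal) ≤ (ρ : ℝ) ∧ A (σ ω) = a) →
      G (σ ω) = g → tI ω - tI (σ ω) ∈ genTimesGA tI G A t g a := by
    rintro g ω ⟨ht, hpos, -, hA⟩ hG
    simp only [genTimesGA, Finset.mem_filter, Finset.mem_image, Finset.mem_univ, true_and]
    exact ⟨⟨σ ω, ⟨hG, hA⟩, by rw [ht]⟩, sub_pos.2 (hσ ω hpos)⟩
  simp only [prC]
  rw [div_sub_div_same, cnt_sub_cnt_of_imp hmono,
    cnt_eq_sum_cnt_fiber (Finset.univ.image G) (fun ω => G (σ ω))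
      fun ω _ => Finset.mem_image_of_mem G (Finset.mem_univ _), Finset.sum_div]
  refine Finset.sum_congr rfl fun g _ => ?_
  rw [cnt_eq_sum_cnt_fiber (genTimesGA tI G A t g a) (fun ω => tI ω - tI (σ ω))
      fun ω h => hgen g ω h.1.1 h.2, Finset.sum_div]
  refine Finset.sum_congr rfl fun τ hτ => ?_
  simp only [genTimesGA, Finset.mem_filter, Finset.mem_image, Finset.mem_univ, true_and] at hτ
  obtain ⟨⟨ω₀, ⟨hG₀, hA₀⟩, ht₀⟩, hτpos⟩ := hτ
  rw [cnt_notified_by_cohort_eq tI σ G A τT ξ hτpos (hsup _ (by linarith))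
    ⟨ω₀, by linarith, hG₀, hA₀⟩ hρ, mul_div_assoc]

end Epidemic

theorem statement_17_general {Ω : Type*} [Fintype Ω] (tI : Ω → ℝ) (σ : Ω → Ω)
    (hσ : ∀ ω, 0 < tI ω → tI (σ ω) < tI ω)
    (G : Ω → ℝ) (A : Ω → AppUse) (τT : Ω → ℝ≥0∞) (τAc : Ω → ℝ≥0∞) (ξ : ℝ → ℝ)
    (t : ℝ)
    (scApp scNoapp : ℝ)
    (hsup : ∀ t' : ℝ, t' < t → ∀ (g : ℝ) (a' : AppUse),
      (Finset.univ.filter (fun ω => tI ω = t' ∧ G ω = g ∧ A ω = a')).Nonempty →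
      ∀ τ : ℝ, 0 < τ → ∀ ρ' : ℝ≥0∞,
        0 < prC (fun ω => tI ω = t' ∧ G ω = g ∧ A ω = a') (fun ω => τT ω = ρ') →
          0 < 1 - ξ t' * FTa tI G A τT t' g a' τ ∧
          expecC (fun ω => tI ω = t' ∧ G ω = g ∧ A ω = a' ∧ τT ω = ρ')
              (ninf tI σ τ) =
            ((1 - ξ t' * (if (ρ' : EReal) ≤ (τ : ℝ) then (1 : ℝ) else 0)) /
                (1 - ξ t' * FTa tI G A τT t' g a' τ)) *
              expecC (fun ω => tI ω = t' ∧ G ω = g ∧ A ω = a') (ninf tI σ τ))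
    (hnotif : ∀ ρ : ℝ, 0 < ρ →
      prC (fun ω => tI ω = t ∧ A ω = AppUse.app)
          (fun ω => (τAc ω : EReal) ≤ (ρ : ℝ)) =
        scApp *
          (prC (fun ω => tI ω = t)
              (fun ω => 0 < tI ω ∧
                (τT (σ ω) : EReal) - ((tI ω - tI (σ ω) : ℝ) : EReal) ≤ (ρ : ℝ) ∧
                A (σ ω) = AppUse.app) -
            prC (fun ω => tI ω = t)
              (fun ω => 0 < tI ω ∧
                (τT (σ ω) : EReal) - ((tI ω - tI (σ ω) : ℝ) : EReal) ≤ ((0 : ℝ) : EReal) ∧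
                A (σ ω) = AppUse.app)) +
        scNoapp *
          (prC (fun ω => tI ω = t)
              (fun ω => 0 < tI ω ∧
                (τT (σ ω) : EReal) - ((tI ω - tI (σ ω) : ℝ) : EReal) ≤ (ρ : ℝ) ∧
                A (σ ω) = AppUse.noapp) -
            prC (fun ω => tI ω = t)
              (fun ω => 0 < tI ω ∧
                (τT (σ ω) : EReal) - ((tI ω - tI (σ ω) : ℝ) : EReal) ≤ ((0 : ℝ) : EReal) ∧
                A (σ ω) = AppUse.noapp))) :
    ∀ ρ : ℝ, 0 < ρ →
      prC (fun ω => tI ω = t ∧ A ω = AppUse.app)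
          (fun ω => (τAc ω : EReal) ≤ (ρ : ℝ)) =
        scApp *
          ∑ g ∈ Finset.univ.image G, ∑ τ ∈ genTimesGA tI G A t g AppUse.app,
            ((FTa tI G A τT (t - τ) g AppUse.app (ρ + τ) -
                FTa tI G A τT (t - τ) g AppUse.app τ) /
                (1 - ξ (t - τ) * FTa tI G A τT (t - τ) g AppUse.app τ)) *
              prC (fun ω => tI ω = t)
                (fun ω => 0 < tI ω ∧ tI ω - tI (σ ω) = τ ∧ G (σ ω) = g ∧
                  A (σ ω) = AppUse.app) +
        scNoapp *
          ∑ g ∈ Finset.univ.image G, ∑ τ ∈ genTimesGA tI G A t g AppUse.noapp,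
            ((FTa tI G A τT (t - τ) g AppUse.noapp (ρ + τ) -
                FTa tI G A τT (t - τ) g AppUse.noapp τ) /
                (1 - ξ (t - τ) * FTa tI G A τT (t - τ) g AppUse.noapp τ)) *
              prC (fun ω => tI ω = t)
                (fun ω => 0 < tI ω ∧ tI ω - tI (σ ω) = τ ∧ G (σ ω) = g ∧
                  A (σ ω) = AppUse.noapp) := by
  intro ρ hρ
  rw [hnotif ρ hρ, prC_notified_sub_eq tI σ hσ G A τT ξ t hsup AppUse.app hρ.le,
    prC_notified_sub_eq tI σ hσ G A τT ξ t hsup AppUse.noapp hρ.le]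

/-- time evolution equation for the notification time of app users.
Epidemic setting with severity `G`, app usage `A`, testing time `τ^T : Ω → [0,∞]`,
contact-tracing notification time `τ^{A,c} : Ω → [0,∞]`, `ξ : ℝ → [0,1]` and
contact-tracing efficiencies `s^{c,app}_t, s^{c,no app}_t ∈ [0,1]`.  Assume the
app-refined suppression hypothesis at all `t' < t` and the app notification
hypothesis, with `F̌^{T,a}_t(ρ) := P_t(τ̌^T_t ≤ ρ ∧ Â_t = a)` and
`τ̌^T(ω) := τ^T(σ ω) − τ^σ(ω)`.  Then for every `ρ > 0`, `P_{t,app}(τ^{A,c} ≤ ρ)`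
equals the sum of the two app/no-app double sums stated in the paper
(Eq. (9)/(19)). -/
theorem statement_17 {Ω : Type*} [Fintype Ω] (tI : Ω → ℝ) (σ : Ω → Ω)
    (hσ : ∀ ω, 0 < tI ω → tI (σ ω) < tI ω)
    (G : Ω → ℝ) (A : Ω → AppUse) (τT : Ω → ℝ≥0∞) (τAc : Ω → ℝ≥0∞) (ξ : ℝ → ℝ)
    (hξ : ∀ s : ℝ, 0 ≤ ξ s ∧ ξ s ≤ 1) (t : ℝ)
    (scApp scNoapp : ℝ) (hscApp : 0 ≤ scApp ∧ scApp ≤ 1)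
    (hscNoapp : 0 ≤ scNoapp ∧ scNoapp ≤ 1)
    (hne : (Finset.univ.filter (fun ω => tI ω = t)).Nonempty)
    (hneApp : (Finset.univ.filter (fun ω => tI ω = t ∧ A ω = AppUse.app)).Nonempty)
    (hsup : ∀ t' : ℝ, t' < t → ∀ (g : ℝ) (a' : AppUse),
      (Finset.univ.filter (fun ω => tI ω = t' ∧ G ω = g ∧ A ω = a')).Nonempty →
      ∀ τ : ℝ, 0 < τ → ∀ ρ' : ℝ≥0∞,
        0 < prC (fun ω => tI ω = t' ∧ G ω = g ∧ A ω = a') (fun ω => τT ω = ρ') →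
          0 < 1 - ξ t' * FTa tI G A τT t' g a' τ ∧
          expecC (fun ω => tI ω = t' ∧ G ω = g ∧ A ω = a' ∧ τT ω = ρ')
              (ninf tI σ τ) =
            ((1 - ξ t' * (if (ρ' : EReal) ≤ (τ : ℝ) then (1 : ℝ) else 0)) /
                (1 - ξ t' * FTa tI G A τT t' g a' τ)) *
              expecC (fun ω => tI ω = t' ∧ G ω = g ∧ A ω = a') (ninf tI σ τ))
    (hnotif : ∀ ρ : ℝ, 0 < ρ →
      prC (fun ω => tI ω = t ∧ A ω = AppUse.app)
          (fun ω => (τAc ω : EReal) ≤ (ρ : ℝ)) =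
        scApp *
          (prC (fun ω => tI ω = t)
              (fun ω => 0 < tI ω ∧
                (τT (σ ω) : EReal) - ((tI ω - tI (σ ω) : ℝ) : EReal) ≤ (ρ : ℝ) ∧
                A (σ ω) = AppUse.app) -
            prC (fun ω => tI ω = t)
              (fun ω => 0 < tI ω ∧
                (τT (σ ω) : EReal) - ((tI ω - tI (σ ω) : ℝ) : EReal) ≤ ((0 : ℝ) : EReal) ∧
                A (σ ω) = AppUse.app)) +
        scNoapp *
          (prC (fun ω => tI ω = t)
              (fun ω => 0 < tI ω ∧
                (τT (σ ω) : EReal) - ((tI ω - tI (σ ω) : ℝ) : EReal) ≤ (ρ : ℝ) ∧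
                A (σ ω) = AppUse.noapp) -
            prC (fun ω => tI ω = t)
              (fun ω => 0 < tI ω ∧
                (τT (σ ω) : EReal) - ((tI ω - tI (σ ω) : ℝ) : EReal) ≤ ((0 : ℝ) : EReal) ∧
                A (σ ω) = AppUse.noapp))) :
    ∀ ρ : ℝ, 0 < ρ →
      prC (fun ω => tI ω = t ∧ A ω = AppUse.app)
          (fun ω => (τAc ω : EReal) ≤ (ρ : ℝ)) =
        scApp *
          ∑ g ∈ Finset.univ.image G, ∑ τ ∈ genTimesGA tI G A t g AppUse.app,
            ((FTa tI G A τT (t - τ) g AppUse.app (ρ + τ) -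
                FTa tI G A τT (t - τ) g AppUse.app τ) /
                (1 - ξ (t - τ) * FTa tI G A τT (t - τ) g AppUse.app τ)) *
              prC (fun ω => tI ω = t)
                (fun ω => 0 < tI ω ∧ tI ω - tI (σ ω) = τ ∧ G (σ ω) = g ∧
                  A (σ ω) = AppUse.app) +
        scNoapp *
          ∑ g ∈ Finset.univ.image G, ∑ τ ∈ genTimesGA tI G A t g AppUse.noapp,
            ((FTa tI G A τT (t - τ) g AppUse.noapp (ρ + τ) -
                FTa tI G A τT (t - τ) g AppUse.noapp τ) /
                (1 - ξ (t - τ) * FTa tI G A τT (t - τ) g AppUse.noapp τ)) *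
              prC (fun ω => tI ω = t)
                (fun ω => 0 < tI ω ∧ tI ω - tI (σ ω) = τ ∧ G (σ ω) = g ∧
                  A (σ ω) = AppUse.noapp) :=
  statement_17_general tI σ hσ G A τT τAc ξ t scApp scNoapp hsup hnotif
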